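/- arXiv:1801.06358 — 4 statements merged into one kernel-verified Lean document; each statement's English description precedes it below -/
import Mathlib

section
/- For any nonzero z ∈ R^N and 1 < q ≤ q' < ∞, the q-ratio sparsity is non-increasing in q: s_{q'}(z) ≤ s_q(z). Moreover s_q(z) ≤ ‖z‖₀ (the number of nonzero entries of z) and ‖z‖₁/‖z‖_∞ ≤ s_q(z). -/
open Finset Matrix

noncomputable def l1 {N : ℕ} (z : Fin N → ℝ) : ℝ := ∑ i, |z i|
noncomputable def lq {N : ℕ} (q : ℝ) (z : Fin N → ℝ) : ℝ := (∑ i, |z i| ^ q) ^ (1/q)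
noncomputable def l2 {m : ℕ} (v : Fin m → ℝ) : ℝ := Real.sqrt (∑ i, (v i)^2)
noncomputable def linf {N : ℕ} (z : Fin N → ℝ) : ℝ := ⨆ i, |z i|
open scoped Classical in
noncomputable def l0 {N : ℕ} (z : Fin N → ℝ) : ℕ := (Finset.univ.filter (fun i => z i ≠ 0)).card
noncomputable def sparsityQ {N : ℕ} (q : ℝ) (z : Fin N → ℝ) : ℝ := (l1 z / lq q z) ^ (q/(q-1))
noncomputable def cmsv {m N : ℕ} (q s : ℝ) (A : Matrix (Fin m) (Fin N) ℝ) : ℝ :=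
  sInf { r | ∃ z : Fin N → ℝ, z ≠ 0 ∧ sparsityQ q z ≤ s ∧ r = l2 (A.mulVec z) / lq q z }

/-!
Writing `w i = |z i| / ‖z‖₁` for the probability vector attached to `z`, one has
`s_q(z) = ‖z‖₁ / M_{q-1}(z)`, where `M_r(z) = (∑ w i * |z i| ^ r) ^ (1/r)` is the power mean of
order `r` of the `|z i|` under the weights `w`. Power means increase with their order and are
bounded by the largest value `‖z‖_∞`, which gives the monotonicity in `q` and the lower bound.
The upper bound `s_q(z) ≤ ‖z‖₀` is Jensen's inequality `‖z‖₁ ^ q ≤ ‖z‖₀ ^ (q-1) * ∑ |z i| ^ q`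
for the convex function `t ↦ t ^ q` on the support of `z`.
-/

namespace Real

theorem rpow_mean_le_rpow_mean {ι : Type*} (s : Finset ι) (w x : ι → ℝ) (hw : ∀ i ∈ s, 0 ≤ w i)
    (hw' : ∑ i ∈ s, w i = 1) (hx : ∀ i ∈ s, 0 ≤ x i) {a b : ℝ} (ha : 0 < a) (hab : a ≤ b) :
    (∑ i ∈ s, w i * x i ^ a) ^ a⁻¹ ≤ (∑ i ∈ s, w i * x i ^ b) ^ b⁻¹ := by
  have hb : 0 < b := ha.trans_le hab
  have hjensen := rpow_arith_mean_le_arith_mean_rpow s w (fun i => x i ^ a) hw hw'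
    (fun i hi => rpow_nonneg (hx i hi) a) ((one_le_div ha).2 hab)
  have hpow : ∀ i ∈ s, w i * (x i ^ a) ^ (b / a) = w i * x i ^ b := fun i hi => by
    rw [← rpow_mul (hx i hi), mul_div_cancel₀ b ha.ne']
  rw [sum_congr rfl hpow] at hjensen
  have hsum_nonneg : 0 ≤ ∑ i ∈ s, w i * x i ^ a :=
    sum_nonneg fun i hi => mul_nonneg (hw i hi) (rpow_nonneg (hx i hi) a)
  rw [le_rpow_inv_iff_of_pos (rpow_nonneg hsum_nonneg _) ((rpow_nonneg hsum_nonneg _).trans hjensen)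
    hb, ← rpow_mul hsum_nonneg, inv_mul_eq_div]
  exact hjensen

end Real

section Sparsity

variable {N : ℕ} {z : Fin N → ℝ}

noncomputable def absPowerMean (r : ℝ) (z : Fin N → ℝ) : ℝ :=
  (∑ i, |z i| / l1 z * |z i| ^ r) ^ r⁻¹

lemma l1_nonneg (z : Fin N → ℝ) : 0 ≤ l1 z :=
  sum_nonneg fun i _ => abs_nonneg (z i)

lemma l1_pos (hz : z ≠ 0) : 0 < l1 z := by
  obtain ⟨i, hi⟩ := Function.ne_iff.1 hz
  exact sum_pos' (fun j _ => abs_nonneg (z j)) ⟨i, mem_univ i, abs_pos.2 hi⟩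

lemma sum_abs_div_l1 (hz : z ≠ 0) : ∑ i, |z i| / l1 z = 1 := by
  rw [← sum_div]
  exact div_self (l1_pos hz).ne'

lemma sum_abs_rpow_pos (hz : z ≠ 0) (q : ℝ) : 0 < ∑ i, |z i| ^ q := by
  obtain ⟨i, hi⟩ := Function.ne_iff.1 hz
  exact sum_pos' (fun j _ => Real.rpow_nonneg (abs_nonneg (z j)) q)
    ⟨i, mem_univ i, Real.rpow_pos_of_pos (abs_pos.2 hi) q⟩

lemma absPowerMean_pos (hz : z ≠ 0) (r : ℝ) : 0 < absPowerMean r z := by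
  obtain ⟨i, hi⟩ := Function.ne_iff.1 hz
  refine Real.rpow_pos_of_pos (sum_pos' (fun j _ => ?_) ⟨i, mem_univ i, ?_⟩) _
  · exact mul_nonneg (div_nonneg (abs_nonneg _) (l1_nonneg z)) (Real.rpow_nonneg (abs_nonneg _) r)
  · exact mul_pos (div_pos (abs_pos.2 hi) (l1_pos hz)) (Real.rpow_pos_of_pos (abs_pos.2 hi) r)

lemma lq_rpow {q : ℝ} (hq : q ≠ 0) (z : Fin N → ℝ) : lq q z ^ q = ∑ i, |z i| ^ q := by
  rw [lq, ← Real.rpow_mul (sum_nonneg fun i _ => Real.rpow_nonneg (abs_nonneg (z i)) q),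
    one_div_mul_cancel hq, Real.rpow_one]

lemma sparsityQ_eq {q : ℝ} (hq : q ≠ 0) (z : Fin N → ℝ) :
    sparsityQ q z = (l1 z ^ q / ∑ i, |z i| ^ q) ^ (q - 1)⁻¹ := by
  have hlq : 0 ≤ lq q z :=
    Real.rpow_nonneg (sum_nonneg fun i _ => Real.rpow_nonneg (abs_nonneg (z i)) q) _
  rw [sparsityQ, div_eq_mul_inv q, Real.rpow_mul (div_nonneg (l1_nonneg z) hlq),
    Real.div_rpow (l1_nonneg z) hlq, lq_rpow hq]

lemma sparsityQ_eq_l1_div_absPowerMean (hz : z ≠ 0) {q : ℝ} (hq : 1 < q) :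
    sparsityQ q z = l1 z / absPowerMean (q - 1) z := by
  have hl1 := l1_pos hz
  have hS := sum_abs_rpow_pos hz q
  have hweighted : ∑ i, |z i| / l1 z * |z i| ^ (q - 1) = (∑ i, |z i| ^ q) / l1 z := by
    rw [sum_div]
    refine sum_congr rfl fun i _ => ?_
    rw [div_mul_eq_mul_div, ← Real.rpow_one_add' (abs_nonneg _) (by linarith), add_sub_cancel]
  have hratio : l1 z ^ q / ∑ i, |z i| ^ q = l1 z ^ (q - 1) / ((∑ i, |z i| ^ q) / l1 z) := by
    rw [Real.rpow_sub_one hl1.ne']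
    field_simp
  rw [sparsityQ_eq (by linarith) z, absPowerMean, hweighted, hratio,
    Real.div_rpow (Real.rpow_nonneg hl1.le _) (div_nonneg hS.le hl1.le),
    Real.rpow_rpow_inv hl1.le (by linarith)]

lemma absPowerMean_monotoneOn (hz : z ≠ 0) : MonotoneOn (absPowerMean · z) (Set.Ioi 0) :=
  fun _ ha _ _ hab => Real.rpow_mean_le_rpow_mean univ _ _
    (fun i _ => div_nonneg (abs_nonneg (z i)) (l1_nonneg z)) (sum_abs_div_l1 hz)
    (fun i _ => abs_nonneg (z i)) ha hab

lemma absPowerMean_le_linf (hz : z ≠ 0) {r : ℝ} (hr : 0 < r) : absPowerMean r z ≤ linf z := by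
  have hle : ∀ i, |z i| ≤ linf z := le_ciSup (f := fun i => |z i|) (Finite.bddAbove_range _)
  have hlinf : 0 ≤ linf z := Real.iSup_nonneg fun i => abs_nonneg (z i)
  have hweights : ∀ i, 0 ≤ |z i| / l1 z := fun i => div_nonneg (abs_nonneg (z i)) (l1_nonneg z)
  rw [absPowerMean, Real.rpow_inv_le_iff_of_pos
    (sum_nonneg fun i _ => mul_nonneg (hweights i) (Real.rpow_nonneg (abs_nonneg _) r))
    hlinf hr]
  calc ∑ i, |z i| / l1 z * |z i| ^ r ≤ ∑ i, |z i| / l1 z * linf z ^ r :=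
        sum_le_sum fun i _ => mul_le_mul_of_nonneg_left
          (Real.rpow_le_rpow (abs_nonneg _) (hle i) hr.le) (hweights i)
    _ = linf z ^ r := by rw [← sum_mul, sum_abs_div_l1 hz, one_mul]

theorem sparsityQ_antitoneOn (hz : z ≠ 0) : AntitoneOn (sparsityQ · z) (Set.Ioi 1) := by
  intro q hq q' hq' hqq'
  simp only [sparsityQ_eq_l1_div_absPowerMean hz hq, sparsityQ_eq_l1_div_absPowerMean hz hq']
  exact div_le_div_of_nonneg_left (l1_nonneg z) (absPowerMean_pos hz _)
    (absPowerMean_monotoneOn hz (Set.mem_Ioi.2 (sub_pos.2 hq)) (Set.mem_Ioi.2 (sub_pos.2 hq'))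
      (sub_le_sub_right hqq' 1))

theorem l1_div_linf_le_sparsityQ (hz : z ≠ 0) {q : ℝ} (hq : 1 < q) :
    l1 z / linf z ≤ sparsityQ q z := by
  rw [sparsityQ_eq_l1_div_absPowerMean hz hq]
  exact div_le_div_of_nonneg_left (l1_nonneg z) (absPowerMean_pos hz _)
    (absPowerMean_le_linf hz (sub_pos.2 hq))

theorem sparsityQ_le_l0 (hz : z ≠ 0) {q : ℝ} (hq : 1 < q) : sparsityQ q z ≤ l0 z := by
  classical
  set T := univ.filter fun i => z i ≠ 0
  have hl1 : l1 z = ∑ i ∈ T, |z i| := (sum_filter_of_ne fun i _ h => abs_ne_zero.1 h).symm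
  have hpow : ∑ i, |z i| ^ q = ∑ i ∈ T, |z i| ^ q := by
    refine (sum_filter_of_ne (p := fun i => z i ≠ 0) fun i _ h hzi => h ?_).symm
    rw [hzi, abs_zero, Real.zero_rpow (by linarith)]
  have hjensen : l1 z ^ q ≤ (#T : ℝ) ^ (q - 1) * ∑ i, |z i| ^ q := by
    rw [hl1, hpow]
    exact Real.rpow_sum_le_const_mul_sum_rpow_of_nonneg T hq.le fun i _ => abs_nonneg (z i)
  have hcard : #T = l0 z := rfl
  rw [sparsityQ_eq (by linarith) z, Real.rpow_inv_le_iff_of_pos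
    (div_nonneg (Real.rpow_nonneg (l1_nonneg z) q) (sum_abs_rpow_pos hz q).le) (Nat.cast_nonneg _)
    (sub_pos.2 hq), div_le_iff₀ (sum_abs_rpow_pos hz q), ← hcard]
  exact hjensen

end Sparsity

theorem stmt2 {N : ℕ} (z : Fin N → ℝ) (hz : z ≠ 0) (q q' : ℝ) (hq : 1 < q) (hqq' : q ≤ q') :
    sparsityQ q' z ≤ sparsityQ q z ∧ sparsityQ q z ≤ (l0 z : ℝ) ∧
      l1 z / linf z ≤ sparsityQ q z :=
  ⟨sparsityQ_antitoneOn hz hq (hq.trans_le hqq') hqq', sparsityQ_le_l0 hz hq,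
    l1_div_linf_le_sparsityQ hz hq⟩
end

section
/- Let z ∈ R^N be a nonzero vector, S ⊆ {1,...,N} with |S| ≤ k, and 1 < q < ∞. If ‖z_S‖₁ ≥ ‖z_{S^c}‖₁, then k ≥ 2^{q/(1-q)} s_q(z), i.e., ‖z‖₁ ≤ 2 k^{1-1/q} ‖z‖_q. -/
open Finset Matrix

/-
Hölder's inequality on `S` gives `‖z_S‖₁ ≤ |S|^{1-1/q} ‖z_S‖_q ≤ k^{1-1/q} ‖z‖_q`, and the hypothesis
`‖z_{Sᶜ}‖₁ ≤ ‖z_S‖₁` gives `‖z‖₁ ≤ 2 ‖z_S‖₁`. Raising `‖z‖₁ / ‖z‖_q ≤ 2 k^{1-1/q}` to the power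
`q/(q-1)`, conjugate to `1 - 1/q`, yields `s_q(z) ≤ 2^{q/(q-1)} k`.
-/

theorem Real.sum_abs_le_card_rpow_mul_sum_abs_rpow {ι : Type*} (s : Finset ι) (f : ι → ℝ)
    {p : ℝ} (hp : 1 ≤ p) :
    ∑ i ∈ s, |f i| ≤ (#s : ℝ) ^ (1 - 1 / p) * (∑ i ∈ s, |f i| ^ p) ^ (1 / p) := by
  have hp0 : 0 < p := by linarith
  have hsum : 0 ≤ ∑ i ∈ s, |f i| := sum_nonneg fun i _ => abs_nonneg _
  calc ∑ i ∈ s, |f i| = ((∑ i ∈ s, |f i|) ^ p) ^ (1 / p) := by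
        rw [← Real.rpow_mul hsum, mul_one_div_cancel hp0.ne', Real.rpow_one]
    _ ≤ ((#s : ℝ) ^ (p - 1) * ∑ i ∈ s, |f i| ^ p) ^ (1 / p) := by
        gcongr
        exact Real.rpow_sum_le_const_mul_sum_rpow s f hp
    _ = (#s : ℝ) ^ (1 - 1 / p) * (∑ i ∈ s, |f i| ^ p) ^ (1 / p) := by
        rw [Real.mul_rpow (by positivity) (by positivity), ← Real.rpow_mul (by positivity)]
        congr 2
        field_simp

section

variable {N : ℕ}

theorem lq_nonneg (q : ℝ) (z : Fin N → ℝ) : 0 ≤ lq q z := by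
  unfold lq
  positivity

theorem sum_abs_le_card_rpow_mul_lq {q : ℝ} (hq : 1 ≤ q) (z : Fin N → ℝ) (S : Finset (Fin N)) :
    ∑ i ∈ S, |z i| ≤ (#S : ℝ) ^ (1 - 1 / q) * lq q z := by
  refine (Real.sum_abs_le_card_rpow_mul_sum_abs_rpow S z hq).trans ?_
  rw [lq]
  gcongr
  exact subset_univ S

theorem l1_le_two_mul_sum_abs_of_sum_compl_le {z : Fin N → ℝ} {S : Finset (Fin N)}
    (h : ∑ i ∈ Sᶜ, |z i| ≤ ∑ i ∈ S, |z i|) : l1 z ≤ 2 * ∑ i ∈ S, |z i| := by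
  rw [l1, ← sum_add_sum_compl S]
  linarith

theorem l1_le_two_mul_rpow_mul_lq {q : ℝ} (hq : 1 ≤ q) {k : ℕ} {z : Fin N → ℝ}
    {S : Finset (Fin N)} (hS : #S ≤ k) (h : ∑ i ∈ Sᶜ, |z i| ≤ ∑ i ∈ S, |z i|) :
    l1 z ≤ 2 * (k : ℝ) ^ (1 - 1 / q) * lq q z := by
  have hexp : 0 ≤ 1 - 1 / q := by
    rw [sub_nonneg, div_le_one (by linarith)]
    exact hq
  calc l1 z ≤ 2 * ∑ i ∈ S, |z i| := l1_le_two_mul_sum_abs_of_sum_compl_le h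
    _ ≤ 2 * ((#S : ℝ) ^ (1 - 1 / q) * lq q z) := by
        gcongr
        exact sum_abs_le_card_rpow_mul_lq hq z S
    _ ≤ 2 * ((k : ℝ) ^ (1 - 1 / q) * lq q z) := by
        gcongr
        exact lq_nonneg q z
    _ = 2 * (k : ℝ) ^ (1 - 1 / q) * lq q z := by ring

theorem sparsityQ_le_rpow_of_l1_le_mul_lq {q c : ℝ} (hq : 1 < q) (hc : 0 ≤ c)
    {z : Fin N → ℝ} (h : l1 z ≤ c * lq q z) : sparsityQ q z ≤ c ^ (q / (q - 1)) := by
  have hratio : l1 z / lq q z ≤ c := div_le_of_le_mul₀ (lq_nonneg q z) hc h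
  have hl1 : 0 ≤ l1 z := sum_nonneg fun i _ => abs_nonneg _
  have hexp : 0 ≤ q / (q - 1) := div_nonneg (by linarith) (by linarith)
  exact Real.rpow_le_rpow (div_nonneg hl1 (lq_nonneg q z)) hratio hexp

end

theorem stmt3_general {N k : ℕ} (z : Fin N → ℝ) (q : ℝ) (hq : 1 < q)
    (S : Finset (Fin N)) (hS : S.card ≤ k)
    (h : ∑ i ∈ Sᶜ, |z i| ≤ ∑ i ∈ S, |z i|) :
    (2:ℝ) ^ (q/(1-q)) * sparsityQ q z ≤ (k : ℝ) ∧
      l1 z ≤ 2 * (k : ℝ) ^ (1 - 1/q) * lq q z := by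
  have hl1 := l1_le_two_mul_rpow_mul_lq hq.le hS h
  refine ⟨?_, hl1⟩
  have hsparse := sparsityQ_le_rpow_of_l1_le_mul_lq hq (by positivity) hl1
  have hq1 : q - 1 ≠ 0 := by linarith
  have hconj : (2 * (k : ℝ) ^ (1 - 1 / q)) ^ (q / (q - 1)) = 2 ^ (q / (q - 1)) * k := by
    rw [Real.mul_rpow (by norm_num) (by positivity), ← Real.rpow_mul (by positivity),
      show (1 - 1 / q) * (q / (q - 1)) = 1 by field_simp, Real.rpow_one]
  have htwo : (2 : ℝ) ^ (q / (1 - q)) * 2 ^ (q / (q - 1)) = 1 := by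
    rw [← Real.rpow_add two_pos, show q / (1 - q) + q / (q - 1) = 0 by
      rw [show 1 - q = -(q - 1) by ring, div_neg, neg_add_cancel], Real.rpow_zero]
  calc (2 : ℝ) ^ (q / (1 - q)) * sparsityQ q z
      ≤ 2 ^ (q / (1 - q)) * (2 ^ (q / (q - 1)) * k) := by
        rw [← hconj]
        exact mul_le_mul_of_nonneg_left hsparse (by positivity)
    _ = k := by rw [← mul_assoc, htwo, one_mul]

theorem stmt3 {N k : ℕ} (z : Fin N → ℝ) (hz : z ≠ 0) (q : ℝ) (hq : 1 < q)
    (S : Finset (Fin N)) (hS : S.card ≤ k)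
    (h : ∑ i ∈ Sᶜ, |z i| ≤ ∑ i ∈ S, |z i|) :
    (2:ℝ) ^ (q/(1-q)) * sparsityQ q z ≤ (k : ℝ) ∧
      l1 z ≤ 2 * (k : ℝ) ^ (1 - 1/q) * lq q z :=
  stmt3_general z q hq S hS h
end

section
/- Suppose x ∈ R^N is k-sparse and for every nonzero z in the kernel of A it holds that ‖z‖₁ > 2 ‖z‖_∞ · k. Then x is the unique minimizer of ‖z‖₁ subject to Az = Ax. -/
open Finset Matrix

theorem stmt5 {m N k : ℕ} (A : Matrix (Fin m) (Fin N) ℝ) (x : Fin N → ℝ)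
    (hx : l0 x ≤ k)
    (hker : ∀ z : Fin N → ℝ, z ≠ 0 → A.mulVec z = 0 →
      2 * linf z * (k : ℝ) < l1 z) :
    ∀ z : Fin N → ℝ, A.mulVec z = A.mulVec x → z ≠ x → l1 x < l1 z := by
  classical
  intro z hAz hzx
  set h : Fin N → ℝ := z - x with hh
  have hne : h ≠ 0 := sub_ne_zero.mpr hzx
  have hkerh : A.mulVec h = 0 := by
    rw [hh, Matrix.mulVec_sub, hAz, sub_self]
  have key := hker h hne hkerh
  have hbdd : BddAbove (Set.range fun i => |h i|) := (Set.finite_range _).bddAbove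
  have hle : ∀ i, |h i| ≤ linf h := fun i => le_ciSup hbdd i
  obtain ⟨i0, hi0⟩ := Function.ne_iff.mp hne
  have hlinf0 : (0:ℝ) ≤ linf h := le_trans (abs_nonneg _) (hle i0)
  set S := Finset.univ.filter (fun i => x i ≠ 0) with hS
  have hScard : S.card ≤ k := by
    simpa [l0, S] using hx
  have hsum : ∑ i ∈ S, |h i| ≤ (k:ℝ) * linf h := by
    calc ∑ i ∈ S, |h i| ≤ ∑ _i ∈ S, linf h := Finset.sum_le_sum fun i _ => hle i
    _ = (S.card : ℝ) * linf h := by rw [Finset.sum_const, nsmul_eq_mul]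
    _ ≤ (k:ℝ) * linf h := by
        exact mul_le_mul_of_nonneg_right (by exact_mod_cast hScard) hlinf0
  have hzS : ∑ i ∈ S, |x i| - ∑ i ∈ S, |h i| ≤ ∑ i ∈ S, |z i| := by
    rw [← Finset.sum_sub_distrib]
    refine Finset.sum_le_sum fun i _ => ?_
    have : z i = x i + h i := by simp [hh]
    rw [this]
    have := abs_sub_abs_le_abs_sub (x i) (-(h i))
    simp only [sub_neg_eq_add, abs_neg] at this
    linarith
  have hzSc : ∑ i ∈ Sᶜ, |z i| = ∑ i ∈ Sᶜ, |h i| := by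
    refine Finset.sum_congr rfl fun i hi => ?_
    have hxi : x i = 0 := by
      simpa [S] using Finset.mem_compl.mp hi
    have : h i = z i := by simp [hh, hxi]
    rw [this]
  have hx1 : l1 x = ∑ i ∈ S, |x i| := by
    rw [l1, ← Finset.sum_add_sum_compl S]
    have : ∑ i ∈ Sᶜ, |x i| = 0 := by
      refine Finset.sum_eq_zero fun i hi => ?_
      have hxi : x i = 0 := by simpa [S] using Finset.mem_compl.mp hi
      simp [hxi]
    rw [this, add_zero]
  have hh1 : l1 h = ∑ i ∈ S, |h i| + ∑ i ∈ Sᶜ, |h i| := by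
    rw [l1, Finset.sum_add_sum_compl]
  have hz1 : l1 z = ∑ i ∈ S, |z i| + ∑ i ∈ Sᶜ, |z i| := by
    rw [l1, Finset.sum_add_sum_compl]
  rw [hz1, hzSc, hx1]
  linarith
end

section
/- Let 1 < q₂ ≤ q₁ < ∞ and set r = q₂(q₁−1)/(q₁(q₂−1)). For any nonzero z ∈ R^N, if s_{q₁}(z) ≤ s then s_{q₂}(z) ≤ s^r. (Inclusion of q-ratio sparsity sublevel sets.) -/
open Finset Matrix

/-! The ratio `‖z‖₁ / ‖z‖_q` grows with `q` because `ℓ_q` norms shrink as `q` grows, and the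
exponents are related by `q₂ / (q₂ - 1) = r * (q₁ / (q₁ - 1))`, so raising
`s_{q₁}(z) ≤ s` to the power `r` gives the claim. -/

theorem Finset.sum_rpow_le_rpow_sum {ι : Type*} (s : Finset ι) {f : ι → ℝ}
    (hf : ∀ i ∈ s, 0 ≤ f i) {t : ℝ} (ht : 1 ≤ t) :
    ∑ i ∈ s, f i ^ t ≤ (∑ i ∈ s, f i) ^ t := by
  have hsplit : ∀ x : ℝ, 0 ≤ x → x ^ t = x * x ^ (t - 1) := fun x hx => by
    rw [← Real.rpow_one_add' hx (by linarith), add_sub_cancel]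
  calc ∑ i ∈ s, f i ^ t = ∑ i ∈ s, f i * f i ^ (t - 1) :=
        sum_congr rfl fun i hi => hsplit _ (hf i hi)
    _ ≤ ∑ i ∈ s, f i * (∑ j ∈ s, f j) ^ (t - 1) := sum_le_sum fun i hi =>
        mul_le_mul_of_nonneg_left
          (Real.rpow_le_rpow (hf i hi) (single_le_sum hf hi) (by linarith)) (hf i hi)
    _ = (∑ i ∈ s, f i) ^ t := by
        rw [← sum_mul, ← hsplit _ (sum_nonneg hf)]

theorem lq_antitone {N : ℕ} (z : Fin N → ℝ) {q₁ q₂ : ℝ} (hq₂ : 0 < q₂) (hq : q₂ ≤ q₁) :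
    lq q₁ z ≤ lq q₂ z := by
  have hq₁ : 0 < q₁ := hq₂.trans_le hq
  have hpow : ∀ i, |z i| ^ q₁ = (|z i| ^ q₂) ^ (q₁ / q₂) := fun i => by
    rw [← Real.rpow_mul (abs_nonneg _), mul_div_cancel₀ _ hq₂.ne']
  have hS : 0 ≤ ∑ i, |z i| ^ q₂ := sum_nonneg fun i _ => by positivity
  calc lq q₁ z = (∑ i, (|z i| ^ q₂) ^ (q₁ / q₂)) ^ (1 / q₁) := by simp only [lq, hpow]
    _ ≤ ((∑ i, |z i| ^ q₂) ^ (q₁ / q₂)) ^ (1 / q₁) := by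
        gcongr
        exact Finset.sum_rpow_le_rpow_sum _ (fun i _ => by positivity)
            ((one_le_div hq₂).mpr hq)
    _ = lq q₂ z := by
        rw [lq, ← Real.rpow_mul hS]
        congr 1
        field_simp

theorem lq_pos {N : ℕ} {z : Fin N → ℝ} (hz : z ≠ 0) (q : ℝ) : 0 < lq q z := by
  obtain ⟨i, hi⟩ := Function.ne_iff.mp hz
  refine Real.rpow_pos_of_pos (sum_pos' (fun j _ => by positivity) ⟨i, mem_univ i, ?_⟩) _
  exact Real.rpow_pos_of_pos (abs_pos.mpr hi) q

theorem l1_div_lq_nonneg {N : ℕ} (z : Fin N → ℝ) (q : ℝ) : 0 ≤ l1 z / lq q z :=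
  div_nonneg (sum_nonneg fun _ _ => abs_nonneg _)
    (Real.rpow_nonneg (sum_nonneg fun _ _ => by positivity) _)

theorem l1_div_lq_monotone {N : ℕ} {z : Fin N → ℝ} (hz : z ≠ 0) {q₁ q₂ : ℝ} (hq₂ : 0 < q₂)
    (hq : q₂ ≤ q₁) : l1 z / lq q₂ z ≤ l1 z / lq q₁ z :=
  div_le_div_of_nonneg_left (sum_nonneg fun _ _ => abs_nonneg _)
    (lq_pos hz q₁) (lq_antitone z hq₂ hq)

theorem stmt6 {N : ℕ} (z : Fin N → ℝ) (hz : z ≠ 0) (q₁ q₂ s r : ℝ)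
    (hq₂ : 1 < q₂) (hq : q₂ ≤ q₁)
    (hr : r = q₂ * (q₁ - 1) / (q₁ * (q₂ - 1)))
    (hs : sparsityQ q₁ z ≤ s) :
    sparsityQ q₂ z ≤ s ^ r := by
  have hq₁ : 1 < q₁ := hq₂.trans_le hq
  have hr0 : 0 ≤ r := by rw [hr]; exact div_nonneg (by nlinarith) (by nlinarith)
  have hexp : q₂ / (q₂ - 1) = q₁ / (q₁ - 1) * r := by
    rw [hr]
    field_simp [sub_ne_zero.mpr hq₁.ne', sub_ne_zero.mpr hq₂.ne']
  calc sparsityQ q₂ z = (l1 z / lq q₂ z) ^ (q₂ / (q₂ - 1)) := rfl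
    _ ≤ (l1 z / lq q₁ z) ^ (q₂ / (q₂ - 1)) :=
        Real.rpow_le_rpow (l1_div_lq_nonneg z q₂) (l1_div_lq_monotone hz (by linarith) hq)
          (div_nonneg (by linarith) (by linarith))
    _ = sparsityQ q₁ z ^ r := by rw [sparsityQ, ← Real.rpow_mul (l1_div_lq_nonneg z q₁), hexp]
    _ ≤ s ^ r := Real.rpow_le_rpow (Real.rpow_nonneg (l1_div_lq_nonneg z q₁) _) hs hr0
end
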